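/- arXiv:2408.00518 — 5 statements merged into one kernel-verified Lean document; each statement's English description precedes it below -/
import Mathlib

section
/- Let H be a complex Hilbert space, let S, T : H → H be continuous linear maps with T self-adjoint, and suppose ⁅S, T⁆ = (−i e) • id for some real number e. Then for every Ω ∈ H, ‖S(exp(i•T)Ω) − e • exp(i•T)Ω‖ = ‖S Ω‖. In particular, the vector exp(i•T)Ω fails to be an eigenvector of S with eigenvalue e exactly by the amount ‖SΩ‖. -/
open NormedSpace Nat

/-- If `⁅s, a⁆ = c • 1` in a complex Banach algebra, then
`s * a ^ (n+1) = a ^ (n+1) * s + ((n+1) * c) • a ^ n`. -/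
lemma comm_pow_aux {𝔸 : Type*} [NormedRing 𝔸] [NormedAlgebra ℂ 𝔸]
    (s a : 𝔸) (c : ℂ) (h : s * a - a * s = c • 1) (n : ℕ) :
    s * a ^ (n + 1) = a ^ (n + 1) * s + (((n : ℂ) + 1) * c) • a ^ n := by
  induction n with
  | zero =>
    have hsa : s * a = a * s + c • 1 := by
      rw [← h]; abel
    simp [hsa]
  | succ n ih =>
    have hsa : s * a = a * s + c • 1 := by
      rw [← h]; abel
    have hpow : s * a ^ (n + 2) = (s * a) * a ^ (n + 1) := by
      rw [mul_assoc, ← _root_.pow_succ']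
    rw [hpow, hsa, add_mul, smul_mul_assoc, one_mul, mul_assoc, ih, mul_add, ← mul_assoc,
      ← _root_.pow_succ', mul_smul_comm, ← _root_.pow_succ']
    push_cast
    module

/-- If `⁅s, a⁆ = c • 1` in a complex Banach algebra, then
`s * exp a = exp a * s + c • exp a`. -/
lemma comm_exp_aux {𝔸 : Type*} [NormedRing 𝔸] [NormedAlgebra ℂ 𝔸] [CompleteSpace 𝔸]
    (s a : 𝔸) (c : ℂ) (h : s * a - a * s = c • 1) :
    s * exp a = exp a * s + c • exp a := by
  have hexp : HasSum (fun n : ℕ => ((n ! : ℂ)⁻¹) • a ^ n) (exp a) :=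
    expSeries_hasSum_exp_of_mem_ball' a ((expSeries_radius_eq_top ℂ 𝔸).symm ▸ edist_lt_top _ _)
  -- left multiplication by s
  have h1 : HasSum (fun n : ℕ => s * (((n ! : ℂ)⁻¹) • a ^ n)) (s * exp a) :=
    hexp.mul_left s
  -- right multiplication by s
  have h2 : HasSum (fun n : ℕ => (((n ! : ℂ)⁻¹) • a ^ n) * s) (exp a * s) :=
    hexp.mul_right s
  -- the correction series
  set g : ℕ → 𝔸 := fun n => s * (((n ! : ℂ)⁻¹) • a ^ n) - (((n ! : ℂ)⁻¹) • a ^ n) * s with hg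
  have hgsucc : ∀ n : ℕ, g (n + 1) = c • (((n ! : ℂ)⁻¹) • a ^ n) := by
    intro n
    have key := comm_pow_aux s a c h n
    have hfac : ((n + 1)! : ℂ) = ((n : ℂ) + 1) * (n ! : ℂ) := by
      push_cast [Nat.factorial_succ]; ring
    have hne1 : ((n : ℂ) + 1) ≠ 0 := by
      exact Nat.cast_add_one_ne_zero n
    have hne2 : ((n !) : ℂ) ≠ 0 := by
      exact_mod_cast (Nat.factorial_ne_zero n)
    simp only [hg, mul_smul_comm, smul_mul_assoc, key]
    rw [smul_add]
    rw [hfac]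
    rw [mul_inv]
    rw [smul_smul, smul_smul]
    rw [add_sub_cancel_left]
    congr 1
    field_simp
  have hg0 : g 0 = 0 := by simp [hg]
  have h3 : HasSum (fun n : ℕ => g (n + 1)) (c • exp a) := by
    have := hexp.const_smul c
    simpa [hgsucc] using this
  have h4 : HasSum g (c • exp a) := by
    refine (hasSum_nat_add_iff' 1).mp ?_
    simpa [hg0] using h3
  have h5 : HasSum (fun n : ℕ => (((n ! : ℂ)⁻¹) • a ^ n) * s + g n)
      (exp a * s + c • exp a) := h2.add h4
  have hfun : (fun n : ℕ => (((n ! : ℂ)⁻¹) • a ^ n) * s + g n)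
      = fun n : ℕ => s * (((n ! : ℂ)⁻¹) • a ^ n) := by
    funext n; simp [hg]
  rw [hfun] at h5
  exact h1.unique h5

/-- If `S, T` are continuous linear maps on a complex Hilbert space `H`,
`T` is self-adjoint, and `⁅S, T⁆ = (-i e) • id` with `e : ℝ`, then for every `Ω ∈ H`
the vector `exp(i•T)Ω` is an approximate eigenvector of `S` with eigenvalue `e`:
`‖S(exp(i•T)Ω) - e • exp(i•T)Ω‖ = ‖S Ω‖`. -/
theorem stmt_2 {H : Type*} [NormedAddCommGroup H] [InnerProductSpace ℂ H] [CompleteSpace H]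
    (S T : H →L[ℂ] H) (hT : IsSelfAdjoint T) (e : ℝ)
    (h : S ∘L T - T ∘L S = ((-Complex.I) * (e : ℂ)) • (1 : H →L[ℂ] H)) :
    ∀ Ω : H,
      ‖S (NormedSpace.exp (Complex.I • T) Ω)
        - (e : ℂ) • NormedSpace.exp (Complex.I • T) Ω‖ = ‖S Ω‖ := by
  intro Ω
  set A : H →L[ℂ] H := Complex.I • T with hA
  -- commutator of S and A
  have hSA : S * A - A * S = (e : ℂ) • (1 : H →L[ℂ] H) := by
    have : S * A - A * S = Complex.I • (S ∘L T - T ∘L S) := by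
      simp [hA, mul_smul_comm, smul_mul_assoc, smul_sub]
      rfl
    rw [this, h, smul_smul]
    congr 1
    rw [← mul_assoc, mul_neg, Complex.I_mul_I]
    ring
  have hcomm : S * exp A = exp A * S + (e : ℂ) • exp A :=
    comm_exp_aux S A (e : ℂ) hSA
  -- hence S (exp A Ω) - e • exp A Ω = exp A (S Ω)
  have hvec : S (exp A Ω) - (e : ℂ) • exp A Ω = exp A (S Ω) := by
    have := congrArg (fun M : H →L[ℂ] H => M Ω) hcomm
    simp only [ContinuousLinearMap.mul_apply, ContinuousLinearMap.add_apply,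
      ContinuousLinearMap.smul_apply] at this
    rw [this]; abel
  rw [hvec]
  -- exp A is unitary
  have hskew : A ∈ skewAdjoint (H →L[ℂ] H) :=
    hT.smul_mem_skewAdjoint Complex.conj_I
  have hu : exp A ∈ unitary (H →L[ℂ] H) :=
    by
      let +nondep : NormedAlgebra ℚ (H →L[ℂ] H) := .restrictScalars ℚ ℂ (H →L[ℂ] H)
      exact exp_mem_unitary_of_mem_skewAdjoint hskew
  exact ContinuousLinearMap.norm_map_of_mem_unitary hu (S Ω)
end

section
/- Let V be a real vector space, σ : V × V → ℝ a bilinear form, A a unital associative ℂ-algebra, and W : V → A a map satisfying the Weyl relation W(u)·W(v) = exp(−(i/2)·σ(u,v)) • W(u+v) for all u, v ∈ V. Let further μ : V × V → ℝ be a bilinear form and ω : A → ℂ a ℂ-linear functional such that ω(W(u)) = exp(−μ(u,u)/2) for all u ∈ V. Then for every finite ordered family v₁, …, vₙ ∈ V, ω(W(v₁)·W(v₂)·⋯·W(vₙ)) = exp(−(i/2)·∑_{1≤i<j≤n} σ(vᵢ, vⱼ)) · exp(−(1/2)·μ(v₁+⋯+vₙ, v₁+⋯+vₙ)). -/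
open scoped BigOperators

private lemma pair_sum_succ {n : ℕ} (f : Fin (n + 2) → Fin (n + 2) → ℝ) :
    (∑ p ∈ Finset.univ.filter
        (fun p : Fin (n + 2) × Fin (n + 2) => p.1 < p.2), f p.1 p.2)
      = (∑ j : Fin (n + 1), f 0 j.succ)
        + ∑ p ∈ Finset.univ.filter
            (fun p : Fin (n + 1) × Fin (n + 1) => p.1 < p.2),
          f p.1.succ p.2.succ := by
  rw [Finset.sum_filter, Finset.sum_filter, ← Finset.univ_product_univ,
    Finset.sum_product, ← Finset.univ_product_univ, Finset.sum_product]
  simp [Fin.sum_univ_succ, Fin.succ_lt_succ_iff, Fin.succ_pos, Fin.succ_ne_zero]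

private lemma weyl_prod {V : Type*} [AddCommGroup V] [Module ℝ V]
    {A : Type*} [Ring A] [Algebra ℂ A]
    (σ : V →ₗ[ℝ] V →ₗ[ℝ] ℝ) (W : V → A)
    (hW : ∀ u v : V, W u * W v
      = Complex.exp (-(Complex.I / 2) * (σ u v : ℝ)) • W (u + v)) :
    ∀ (n : ℕ) (v : Fin (n + 1) → V),
      (List.ofFn fun i => W (v i)).prod
        = Complex.exp (-(Complex.I / 2) *
            (∑ p ∈ Finset.univ.filter
                (fun p : Fin (n + 1) × Fin (n + 1) => p.1 < p.2),
              (σ (v p.1) (v p.2) : ℝ) : ℝ)) • W (∑ i, v i) := by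
  intro n
  induction n with
  | zero =>
    intro v
    have he : (Finset.univ.filter
        (fun p : Fin 1 × Fin 1 => p.1 < p.2)) = ∅ := by decide
    simp [he, List.ofFn_succ]
  | succ m ih =>
    intro v
    rw [List.ofFn_succ, List.prod_cons]
    have := ih (fun j => v j.succ)
    rw [show ((List.ofFn fun i : Fin (m + 1) => W (v i.succ)).prod)
        = _ from this, mul_smul_comm, hW]
    rw [smul_smul, ← Complex.exp_add]
    have hsum : v 0 + ∑ i : Fin (m + 1), v i.succ = ∑ i, v i :=
      (Fin.sum_univ_succ v).symm
    rw [hsum]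
    congr 1
    rw [pair_sum_succ (fun i j => σ (v i) (v j))]
    have hσ : (σ (v 0)) (∑ i : Fin (m + 1), v i.succ)
        = ∑ j : Fin (m + 1), σ (v 0) (v j.succ) := by
      rw [map_sum]
    push_cast [hσ]
    ring

/-- If `W : V → A` satisfies the Weyl relation for a bilinear form
`σ` and `ω : A → ℂ` is a `ℂ`-linear functional with `ω(W(u)) = exp(-μ(u,u)/2)` for a
bilinear form `μ` (abstracting a quasifree state on the Weyl algebra), then
`ω(W(v₁)⋯W(vₙ)) = exp(-(i/2)·∑_{i<j} σ(vᵢ,vⱼ)) · exp(-(1/2)·μ(∑vᵢ, ∑vᵢ))`. -/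
theorem stmt_6 {V : Type*} [AddCommGroup V] [Module ℝ V]
    {A : Type*} [Ring A] [Algebra ℂ A]
    (σ : V →ₗ[ℝ] V →ₗ[ℝ] ℝ) (W : V → A)
    (hW : ∀ u v : V, W u * W v
      = Complex.exp (-(Complex.I / 2) * (σ u v : ℝ)) • W (u + v))
    (μ : V →ₗ[ℝ] V →ₗ[ℝ] ℝ) (ω : A →ₗ[ℂ] ℂ)
    (hω : ∀ u : V, ω (W u) = Complex.exp (-((μ u u : ℝ) : ℂ) / 2)) :
    ∀ (n : ℕ) (v : Fin (n + 1) → V),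
      ω (List.ofFn fun i => W (v i)).prod
        = Complex.exp (-(Complex.I / 2) *
            (∑ p ∈ Finset.univ.filter
                (fun p : Fin (n + 1) × Fin (n + 1) => p.1 < p.2),
              (σ (v p.1) (v p.2) : ℝ) : ℝ))
          * Complex.exp (-(1 / 2 : ℂ) * ((μ (∑ i, v i) (∑ i, v i) : ℝ) : ℂ)) := by
  intro n v
  rw [weyl_prod σ W hW n v, map_smul, smul_eq_mul, hω]
  congr 1
  congr 1
  ring
end

section
/- Let V be a real vector space, σ : V × V → ℝ an alternating bilinear form, μ : V × V → ℝ a symmetric bilinear form, A a unital associative ℂ-algebra, W : V → A a map satisfying the Weyl relation W(u)·W(v) = exp(−(i/2)·σ(u,v)) • W(u+v) for all u, v ∈ V, and ω : A → ℂ a ℂ-linear functional with ω(W(u)) = exp(−μ(u,u)/2) for all u ∈ V. Then for all f₁, f₂ ∈ V and all real z₁,…,z₄, x₁,…,x₄, writing Z = z₁+z₂+z₃+z₄ and X = x₁+x₂+x₃+x₄: ω(W(z₁f₁)·W(x₁f₂)·W(x₂f₂)·W(z₂f₁)·W(z₃f₁)·W(x₃f₂)·W(x₄f₂)·W(z₄f₁))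 = exp(−(1/2)[Z²·μ(f₁,f₁) + X²·μ(f₂,f₂) + 2XZ·μ(f₁,f₂)]) · exp(−(i/2)[(x₁+x₂)(z₁−z₂−z₃−z₄) + (x₃+x₄)(z₁+z₂+z₃−z₄)]·σ(f₁,f₂)). -/
/-- Explicit quasifree expectation value of the eightfold Weyl product
for the single-sender channel: with `Z = z₁+z₂+z₃+z₄` and `X = x₁+x₂+x₃+x₄`,
`ω(W(z₁f₁)W(x₁f₂)W(x₂f₂)W(z₂f₁)W(z₃f₁)W(x₃f₂)W(x₄f₂)W(z₄f₁))
  = exp(-(1/2)[Z²μ(f₁,f₁) + X²μ(f₂,f₂) + 2XZμ(f₁,f₂)])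
    · exp(-(i/2)[(x₁+x₂)(z₁−z₂−z₃−z₄) + (x₃+x₄)(z₁+z₂+z₃−z₄)]σ(f₁,f₂))`. -/
theorem stmt_9 {V : Type*} [AddCommGroup V] [Module ℝ V]
    {A : Type*} [Ring A] [Algebra ℂ A]
    (σ : V →ₗ[ℝ] V →ₗ[ℝ] ℝ) (halt : ∀ u : V, σ u u = 0)
    (μ : V →ₗ[ℝ] V →ₗ[ℝ] ℝ) (hsymm : ∀ u v : V, μ u v = μ v u)
    (W : V → A)
    (hW : ∀ u v : V, W u * W v
      = Complex.exp (-(Complex.I / 2) * (σ u v : ℝ)) • W (u + v))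
    (ω : A →ₗ[ℂ] ℂ)
    (hω : ∀ u : V, ω (W u) = Complex.exp (-((μ u u : ℝ) : ℂ) / 2))
    (f₁ f₂ : V) (z₁ z₂ z₃ z₄ x₁ x₂ x₃ x₄ : ℝ) :
    ω (W (z₁ • f₁) * W (x₁ • f₂) * W (x₂ • f₂) * W (z₂ • f₁)
        * W (z₃ • f₁) * W (x₃ • f₂) * W (x₄ • f₂) * W (z₄ • f₁))
      = Complex.exp (-(1 / 2 : ℂ) *
            (((z₁ + z₂ + z₃ + z₄) ^ 2 * μ f₁ f₁
              + (x₁ + x₂ + x₃ + x₄) ^ 2 * μ f₂ f₂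
              + 2 * (x₁ + x₂ + x₃ + x₄) * (z₁ + z₂ + z₃ + z₄) * μ f₁ f₂ : ℝ) : ℂ))
        * Complex.exp (-(Complex.I / 2) *
            ((((x₁ + x₂) * (z₁ - z₂ - z₃ - z₄)
              + (x₃ + x₄) * (z₁ + z₂ + z₃ - z₄)) * σ f₁ f₂ : ℝ) : ℂ)) := by
  simp only [hW, smul_mul_assoc, map_smul, hω, smul_eq_mul, ← Complex.exp_add,
    map_add, map_smul, LinearMap.add_apply, LinearMap.smul_apply, smul_eq_mul, halt]
  congr 1
  have h12 : μ f₁ f₂ = μ f₂ f₁ := hsymm f₁ f₂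
  have h21 : σ f₂ f₁ = -σ f₁ f₂ := by
    have := halt (f₁ + f₂)
    simp [map_add, LinearMap.add_apply, halt] at this
    linarith
  push_cast
  rw [h12, h21]
  push_cast
  ring
end

section
/- Let V be a real vector space, σ : V × V → ℝ an alternating bilinear form, μ : V × V → ℝ a symmetric bilinear form, A a unital associative ℂ-algebra, W : V → A a map satisfying the Weyl relation W(u)·W(v) = exp(−(i/2)·σ(u,v)) • W(u+v) for all u, v ∈ V, and ω : A → ℂ a ℂ-linear functional with ω(W(u)) = exp(−μ(u,u)/2) for all u ∈ V. Then for all f₁, f₂, g₁, g₂ ∈ V and all real z₁,…,z₄, x₁,…,x₄, writing u = (z₁+z₄)f₁ + (x₁+x₄)f₂ + (z₂+z₃)g₁ + (x₂+x₃)g₂: ω(W(z₁f₁)·W(x₁f₂)·W(x₂g₂)·W(z₂g₁)·W(z₃g₁)·W(x₃g₂)·W(x₄f₂)·W(z₄f₁)) = exp(−(1/2)·μ(u,u)) · exp(−(i/2)[(z₁−z₄)(x₁+x₄)·σ(f₁,f₂) + (z₂+z₃)(x₃−x₂)·σ(g₁,g₂) + (z₂+z₃)(z₁−z₄)·σ(f₁,g₁)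 + (z₁−z₄)(x₂+x₃)·σ(f₁,g₂) + (z₂+z₃)(x₁−x₄)·σ(f₂,g₁) + (x₂+x₃)(x₁−x₄)·σ(f₂,g₂)]). -/
/-- Explicit quasifree expectation value of the eightfold Weyl
product for the two-party (Alice–Bob) channel: with
`u = (z₁+z₄)f₁ + (x₁+x₄)f₂ + (z₂+z₃)g₁ + (x₂+x₃)g₂`,
`ω(W(z₁f₁)W(x₁f₂)W(x₂g₂)W(z₂g₁)W(z₃g₁)W(x₃g₂)W(x₄f₂)W(z₄f₁))
  = exp(-(1/2)μ(u,u)) · exp(-(i/2)[…six σ-terms…])`. -/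
theorem stmt_10 {V : Type*} [AddCommGroup V] [Module ℝ V]
    {A : Type*} [Ring A] [Algebra ℂ A]
    (σ : V →ₗ[ℝ] V →ₗ[ℝ] ℝ) (halt : ∀ u : V, σ u u = 0)
    (μ : V →ₗ[ℝ] V →ₗ[ℝ] ℝ) (hsymm : ∀ u v : V, μ u v = μ v u)
    (W : V → A)
    (hW : ∀ u v : V, W u * W v
      = Complex.exp (-(Complex.I / 2) * (σ u v : ℝ)) • W (u + v))
    (ω : A →ₗ[ℂ] ℂ)
    (hω : ∀ u : V, ω (W u) = Complex.exp (-((μ u u : ℝ) : ℂ) / 2))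
    (f₁ f₂ g₁ g₂ : V) (z₁ z₂ z₃ z₄ x₁ x₂ x₃ x₄ : ℝ) :
    ω (W (z₁ • f₁) * W (x₁ • f₂) * W (x₂ • g₂) * W (z₂ • g₁)
        * W (z₃ • g₁) * W (x₃ • g₂) * W (x₄ • f₂) * W (z₄ • f₁))
      = Complex.exp (-(1 / 2 : ℂ) *
            ((μ ((z₁ + z₄) • f₁ + (x₁ + x₄) • f₂ + (z₂ + z₃) • g₁ + (x₂ + x₃) • g₂)
                ((z₁ + z₄) • f₁ + (x₁ + x₄) • f₂ + (z₂ + z₃) • g₁ + (x₂ + x₃) • g₂)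
              : ℝ) : ℂ))
        * Complex.exp (-(Complex.I / 2) *
            (((z₁ - z₄) * (x₁ + x₄) * σ f₁ f₂
              + (z₂ + z₃) * (x₃ - x₂) * σ g₁ g₂
              + (z₂ + z₃) * (z₁ - z₄) * σ f₁ g₁
              + (z₁ - z₄) * (x₂ + x₃) * σ f₁ g₂
              + (z₂ + z₃) * (x₁ - x₄) * σ f₂ g₁
              + (x₂ + x₃) * (x₁ - x₄) * σ f₂ g₂ : ℝ) : ℂ)) := by
  have hskew : ∀ u v : V, σ v u = - σ u v := by
    intro u v
    have h := halt (u + v)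
    simp [map_add, halt u, halt v] at h
    linarith
  have hvec : z₁ • f₁ + x₁ • f₂ + x₂ • g₂ + z₂ • g₁ + z₃ • g₁ + x₃ • g₂ + x₄ • f₂ + z₄ • f₁
      = (z₁ + z₄) • f₁ + (x₁ + x₄) • f₂ + (z₂ + z₃) • g₁ + (x₂ + x₃) • g₂ := by
    module
  simp only [hW, smul_mul_assoc, smul_smul, ← Complex.exp_add, map_smul, smul_eq_mul]
  rw [hvec, hω, ← Complex.exp_add]
  congr 1
  simp only [map_add, map_smul, LinearMap.add_apply, LinearMap.smul_apply, smul_eq_mul,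
    halt, hskew f₁ f₂, hskew f₁ g₁, hskew f₁ g₂, hskew f₂ g₁, hskew f₂ g₂, hskew g₁ g₂]
  push_cast
  ring
end

section
/- For every real t ≥ 0, define P₊ = (1 + e^{−t})/4 and P₋ = (1 − e^{−t})/4, and let M be the 4×4 complex matrix with entries M₀₀ = M₃₃ = P₋, M₁₁ = M₂₂ = P₊, M₀₃ = M₃₀ = P₊, and all other entries 0. Then M is Hermitian and the sum of the absolute values of its (real) eigenvalues, counted with multiplicity, equals 1 + e^{−t}. Consequently the negativity N = ((∑ᵢ |λᵢ|) − 1)/2 equals e^{−t}/2; in particular it is strictly positive for every t ≥ 0, and equals the maximal value 1/2 at t = 0. -/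
set_option maxHeartbeats 1000000


open Matrix

/-- If a Hermitian 4×4 matrix annihilates `(M - a)(M - b)(M - c)`, every eigenvalue is
`a`, `b` or `c`. -/
lemma eig_mem_aux (M : Matrix (Fin 4) (Fin 4) ℂ) (hM : M.IsHermitian) (a b c : ℝ)
    (hN : (M - (a : ℂ) • 1) * ((M - (b : ℂ) • 1) * (M - (c : ℂ) • 1)) = 0) (i : Fin 4) :
    hM.eigenvalues i = a ∨ hM.eigenvalues i = b ∨ hM.eigenvalues i = c := by
  set lam := hM.eigenvalues i with hlam
  set v : Fin 4 → ℂ := ⇑(hM.eigenvectorBasis i) with hv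
  have hv0 : v ≠ 0 := by
    intro h
    apply hM.eigenvectorBasis.orthonormal.ne_zero i
    ext j
    exact congrFun h j
  have key : ∀ r : ℝ, (M - (r : ℂ) • 1) *ᵥ v = ((lam - r : ℝ) : ℂ) • v := by
    intro r
    rw [Matrix.sub_mulVec, hM.mulVec_eigenvectorBasis, Matrix.smul_mulVec,
      Matrix.one_mulVec]
    funext j
    simp only [Pi.sub_apply, Pi.smul_apply, smul_eq_mul, Complex.real_smul]
    push_cast
    ring
  have h0 : ((((lam - c : ℝ) : ℂ) * ((lam - b : ℝ) : ℂ)) * ((lam - a : ℝ) : ℂ)) • v = 0 := by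
    have h := congrArg (fun N : Matrix (Fin 4) (Fin 4) ℂ => N *ᵥ v) hN
    simp only [Matrix.zero_mulVec] at h
    rw [← Matrix.mulVec_mulVec, ← Matrix.mulVec_mulVec, key, Matrix.mulVec_smul, key,
      Matrix.mulVec_smul, Matrix.mulVec_smul, key, smul_smul, smul_smul] at h
    exact h
  rcases smul_eq_zero.mp h0 with h | h
  · rcases mul_eq_zero.mp h with h | h
    · rcases mul_eq_zero.mp h with h | h
      · right; right
        have : (lam - c : ℝ) = 0 := by exact_mod_cast h
        linarith
      · right; left
        have : (lam - b : ℝ) = 0 := by exact_mod_cast h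
        linarith
    · left
      have : (lam - a : ℝ) = 0 := by exact_mod_cast h
      linarith
  · exact absurd h hv0

/-- Combinatorial core: four reals, each from a three-element set, summing to 1. -/
lemma abs_sum_aux (e a b c d : ℝ) (he : 0 < e) (he1 : e ≤ 1)
    (ha : a = (1 + e) / 4 ∨ a = 1 / 2 ∨ a = -(e / 2))
    (hb : b = (1 + e) / 4 ∨ b = 1 / 2 ∨ b = -(e / 2))
    (hc : c = (1 + e) / 4 ∨ c = 1 / 2 ∨ c = -(e / 2))
    (hd : d = (1 + e) / 4 ∨ d = 1 / 2 ∨ d = -(e / 2))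
    (hsum : a + b + c + d = 1) :
    |a| + |b| + |c| + |d| = 1 + e := by
  have h1 : |(1 + e) / 4| = (1 + e) / 4 := abs_of_pos (by linarith)
  have h2 : |(1 : ℝ) / 2| = 1 / 2 := abs_of_pos (by norm_num)
  have h3 : |-(e / 2)| = e / 2 := by rw [abs_neg, abs_of_pos (by linarith)]
  rcases ha with rfl | rfl | rfl <;> rcases hb with rfl | rfl | rfl <;>
    rcases hc with rfl | rfl | rfl <;> rcases hd with rfl | rfl | rfl <;>
    simp only [h1, h2, h3] <;> linarith

/-- For `t ≥ 0`, set `P₊ = (1 + e^{-t})/4`, `P₋ = (1 − e^{-t})/4`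
and let `M` be the 4×4 matrix with `M₀₀ = M₃₃ = P₋`, `M₁₁ = M₂₂ = P₊`,
`M₀₃ = M₃₀ = P₊`, all other entries `0` (the partial transpose of the
environment–Bob density matrix).  Then `M` is Hermitian, the sum of the absolute
values of its eigenvalues equals `1 + e^{-t}`, so the negativity
`N = ((∑|λᵢ|) − 1)/2` equals `e^{-t}/2`; it is strictly positive for every `t ≥ 0`
and attains the maximal value `1/2` at `t = 0`. -/
theorem stmt_13 (t : ℝ) (ht : 0 ≤ t) :
    let Pp : ℝ := (1 + Real.exp (-t)) / 4
    let Pm : ℝ := (1 - Real.exp (-t)) / 4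
    let M : Matrix (Fin 4) (Fin 4) ℂ :=
      !![(Pm : ℂ), 0, 0, (Pp : ℂ);
         0, (Pp : ℂ), 0, 0;
         0, 0, (Pp : ℂ), 0;
         (Pp : ℂ), 0, 0, (Pm : ℂ)]
    M.IsHermitian
    ∧ (∀ hM : M.IsHermitian,
        (∑ i, |hM.eigenvalues i|) = 1 + Real.exp (-t)
        ∧ ((∑ i, |hM.eigenvalues i|) - 1) / 2 = Real.exp (-t) / 2)
    ∧ 0 < Real.exp (-t) / 2
    ∧ (t = 0 → Real.exp (-t) / 2 = 1 / 2) := by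
  intro Pp Pm M
  have he : 0 < Real.exp (-t) := Real.exp_pos _
  have he1 : Real.exp (-t) ≤ 1 := by
    calc Real.exp (-t) ≤ Real.exp 0 := Real.exp_le_exp.mpr (by linarith)
    _ = 1 := Real.exp_zero
  have herm : M.IsHermitian := by
    unfold Matrix.IsHermitian
    ext i j
    fin_cases i <;> fin_cases j <;>
      simp [M, Matrix.conjTranspose_apply, Matrix.vecHead, Matrix.vecTail, Function.comp]
  refine ⟨herm, ?_, by positivity, fun h0 => by simp [h0]⟩
  intro hM
  -- polynomial annihilation
  have hN : (M - ((Pp : ℝ) : ℂ) • 1) *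
      ((M - (((1 : ℝ) / 2 : ℝ) : ℂ) • 1) * (M - ((-(Real.exp (-t) / 2) : ℝ) : ℂ) • 1)) = 0 := by
    ext i j
    fin_cases i <;> fin_cases j <;>
      · simp [M, Pp, Pm, Matrix.mul_apply, Fin.sum_univ_four, Matrix.one_apply,
          Matrix.vecHead, Matrix.vecTail, Function.comp]
        try push_cast
        try ring
  have hroot : ∀ i, hM.eigenvalues i = Pp ∨ hM.eigenvalues i = 1 / 2 ∨
      hM.eigenvalues i = -(Real.exp (-t) / 2) :=
    eig_mem_aux M hM Pp (1 / 2) (-(Real.exp (-t) / 2)) hN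
  -- trace
  have htr : (∑ i, hM.eigenvalues i) = 1 := by
    have h1 : M.trace = ∑ i, (hM.eigenvalues i : ℂ) := by
      conv_lhs => rw [hM.spectral_theorem]
      rw [Unitary.conjStarAlgAut_apply, Matrix.trace_mul_cycle,
        (Matrix.mem_unitaryGroup_iff').mp (hM.eigenvectorUnitary).2, one_mul,
        Matrix.trace_diagonal]
      simp [Function.comp]
    have h2 : M.trace = 1 := by
      simp [M, Pp, Pm, Matrix.trace, Matrix.diag, Fin.sum_univ_four]
      ring
    rw [h2] at h1
    exact_mod_cast h1.symm
  have hPp : Pp = (1 + Real.exp (-t)) / 4 := rfl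
  have hsum4 : hM.eigenvalues 0 + hM.eigenvalues 1 + hM.eigenvalues 2 + hM.eigenvalues 3 = 1 := by
    rw [← htr, Fin.sum_univ_four]
  have habs : (∑ i, |hM.eigenvalues i|) = 1 + Real.exp (-t) := by
    rw [Fin.sum_univ_four]
    refine abs_sum_aux (Real.exp (-t)) _ _ _ _ he he1 ?_ ?_ ?_ ?_ hsum4 <;>
      · rw [← hPp]
        exact hroot _
  exact ⟨habs, by rw [habs]; ring⟩
end
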